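/- Let n ≥ 2 and d ≥ 1 be integers and let (z_0, z_1, …, z_d, z_{11}, …, z_{dd}) ∈ ℝ^{2d+1}. If z_0 > 0 and Σ_{α=1}^d max{z_0 z_{αα}/n, z_α²/n} ≤ z_0² ((n−1)/n)² + Σ_{α=1}^d (n−1) z_0 z_{αα}/n², then there exists a finite Borel measure μ on K_n^d, invariant under permutations of the n ball factors, such that μ(K_n^d) = z_0, ∫ s_α dμ = z_α for all 1 ≤ α ≤ d, and ∫ s_{αα} dμ = z_{αα} for all 1 ≤ α ≤ d. -/

import Mathlib

open scoped BigOperators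
open MeasureTheory

/-- `sLin n d α x = ∑ i, ξ_{i,α}` -/
noncomputable def sLin (n d : ℕ) (α : Fin d) (x : Fin n → Fin d → ℝ) : ℝ :=
  ∑ i, x i α

/-- `sQuad n d α x = ∑_{i ≠ j} ξ_{i,α} ξ_{j,α}` (sum over ordered pairs). -/
noncomputable def sQuad (n d : ℕ) (α : Fin d) (x : Fin n → Fin d → ℝ) : ℝ :=
  ∑ i, ∑ j, if i = j then 0 else x i α * x j α

/-!
After dividing by `z0` it suffices to write `(z α / z0, zz α / z0)_α` as a convex combination
`∑ w_k M(y_k)` of moment vectors `M(x) = (sLin α x, sQuad α x)_α` of points `y_k ∈ K_n^d`: the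
measure `z0 ∑ w_k δ_{y_k}`, averaged over the permutations of the factors, then has the required mass and
moments, because `K_n^d`, `sLin` and `sQuad` are permutation invariant.

The columns `α` decouple. If the `α`-th column of `x` lies in the box `[-g_α, g_α]^n` and
`∑ g_α² ≤ 1`, then `x ∈ K_n^d`; and the convex hull of a product is the product of the convex hulls.
For a single column, the moments `(∑ v_i, (∑ v_i)² - ∑ v_i²)` of vectors of the box include
`(± n g, n (n - 1) g²)` (constant vectors) and, for each `|a| ≤ n g`, a point `(a, a² - ∑ v_i²)`
with `∑ v_i² ≥ (n - 1) g²` (all coordinates but one equal to `± g`). A horizontal and a vertical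
segment between these points fill the region `a² ≤ n² g²`, `a² - (n - 1) g² ≤ b ≤ n (n - 1) g²`.
The hypothesis on `z, zz` is what makes `g_α² = columnScale n (z α / z0) (zz α / z0)` admissible.
-/

open scoped ENNReal

section Permute

variable {ι β : Type*}

def permute (σ : Equiv.Perm ι) (x : ι → β) : ι → β := fun i => x (σ i)

lemma permute_comp_permute (σ τ : Equiv.Perm ι) :
    permute (β := β) τ ∘ permute σ = permute (σ * τ) := rfl

lemma preimage_permute_setOf_forall (σ : Equiv.Perm ι) (P : β → Prop) :
    permute σ ⁻¹' {x | ∀ i, P (x i)} = {x | ∀ i, P (x i)} := by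
  ext x; exact (σ.surjective.forall (p := fun i => P (x i))).symm

@[fun_prop]
lemma measurable_permute [MeasurableSpace β] (σ : Equiv.Perm ι) :
    Measurable (permute (β := β) σ) :=
  measurable_pi_lambda _ fun i => measurable_pi_apply (σ i)

end Permute

namespace MeasureTheory.Measure

variable {ι β : Type*} [Fintype ι] [DecidableEq ι] [MeasurableSpace β]

noncomputable def symmetrize (μ : Measure (ι → β)) : Measure (ι → β) :=
  (Fintype.card (Equiv.Perm ι) : ℝ≥0∞)⁻¹ • ∑ σ, μ.map (permute σ)

lemma map_permute_symmetrize (μ : Measure (ι → β)) (τ : Equiv.Perm ι) :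
    μ.symmetrize.map (permute τ) = μ.symmetrize := by
  rw [symmetrize, Measure.map_smul, map_finset_sum' (measurable_permute τ).aemeasurable]
  congr 1
  simp_rw [Measure.map_map (measurable_permute τ) (measurable_permute _), permute_comp_permute]
  exact Fintype.sum_equiv (Equiv.mulRight τ) _ _ fun _ => rfl

lemma symmetrize_apply (μ : Measure (ι → β)) {s : Set (ι → β)} (hs : MeasurableSet s)
    (hinv : ∀ σ, permute σ ⁻¹' s = s) : μ.symmetrize s = μ s := by
  simp only [symmetrize, Measure.smul_apply, Measure.finsetSum_apply,
    Measure.map_apply (measurable_permute _) hs, hinv, Finset.sum_const, Finset.card_univ,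
    nsmul_eq_mul, smul_eq_mul, ← mul_assoc]
  rw [ENNReal.inv_mul_cancel (by simp) (by simp), one_mul]

lemma isFiniteMeasure_symmetrize (μ : Measure (ι → β)) [IsFiniteMeasure μ] :
    IsFiniteMeasure μ.symmetrize :=
  ⟨by rw [symmetrize_apply μ MeasurableSet.univ fun _ => rfl]; exact measure_lt_top μ _⟩

lemma integral_symmetrize {E : Type*} [NormedAddCommGroup E] [NormedSpace ℝ E]
    (μ : Measure (ι → β)) {f : (ι → β) → E} (hf : StronglyMeasurable f)
    (hfμ : Integrable f μ) (hinv : ∀ σ x, f (permute σ x) = f x) :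
    ∫ x, f x ∂μ.symmetrize = ∫ x, f x ∂μ := by
  have hmap : ∀ σ, Integrable f (μ.map (permute σ)) := fun σ =>
    (integrable_map_measure hf.aestronglyMeasurable (measurable_permute σ).aemeasurable).2
      (by rwa [show f ∘ permute σ = f from funext (hinv σ)])
  rw [symmetrize, integral_smul_measure, integral_finsetSum_measure fun σ _ => hmap σ]
  simp only [integral_map (measurable_permute _).aemeasurable hf.aestronglyMeasurable, hinv,
    Finset.sum_const, Finset.card_univ, ← Nat.cast_smul_eq_nsmul ℝ, smul_smul,
    ENNReal.toReal_inv, ENNReal.toReal_natCast]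
  rw [inv_mul_cancel₀ (by simp), one_smul]

end MeasureTheory.Measure

section Atomic

variable {κ X E : Type*} [Fintype κ] [MeasurableSpace X] [NormedAddCommGroup E]

lemma integrable_sum_smul_dirac [MeasurableSingletonClass X] (w : κ → ℝ) (y : κ → X) (f : X → E) :
    Integrable f (∑ k, ENNReal.ofReal (w k) • Measure.dirac (y k)) :=
  integrable_finsetSum_measure.2 fun _ _ =>
    (integrable_dirac enorm_lt_top).smul_measure ENNReal.ofReal_ne_top

lemma integral_sum_smul_dirac [MeasurableSingletonClass X] [NormedSpace ℝ E] [CompleteSpace E]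
    {w : κ → ℝ} (hw : ∀ k, 0 ≤ w k) (y : κ → X) (f : X → E) :
    ∫ x, f x ∂(∑ k, ENNReal.ofReal (w k) • Measure.dirac (y k)) = ∑ k, w k • f (y k) := by
  rw [integral_finsetSum_measure fun _ _ =>
    (integrable_dirac enorm_lt_top).smul_measure ENNReal.ofReal_ne_top]
  simp [integral_smul_measure, ENNReal.toReal_ofReal (hw _)]

lemma sum_smul_dirac_apply_of_forall_mem (w : κ → ℝ) {y : κ → X} {s : Set X}
    (hs : MeasurableSet s) (hy : ∀ k, y k ∈ s) :
    (∑ k, ENNReal.ofReal (w k) • Measure.dirac (y k)) s = ∑ k, ENNReal.ofReal (w k) := by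
  simp [Measure.finsetSum_apply, Measure.dirac_apply' _ hs, hy]

lemma isFiniteMeasure_sum_smul_dirac (w : κ → ℝ) (y : κ → X) :
    IsFiniteMeasure (∑ k, ENNReal.ofReal (w k) • Measure.dirac (y k)) :=
  ⟨by
    rw [sum_smul_dirac_apply_of_forall_mem w MeasurableSet.univ fun _ => Set.mem_univ _]
    exact ENNReal.sum_lt_top.2 fun _ _ => ENNReal.ofReal_lt_top⟩

lemma sum_smul_dirac_apply_of_forall_notMem (w : κ → ℝ) {y : κ → X} {s : Set X}
    (hs : MeasurableSet s) (hy : ∀ k, y k ∉ s) :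
    (∑ k, ENNReal.ofReal (w k) • Measure.dirac (y k)) s = 0 := by
  simp [Measure.finsetSum_apply, Measure.dirac_apply' _ hs, hy]

end Atomic

lemma sum_offDiag_mul_eq {ι : Type*} [Fintype ι] [DecidableEq ι] (v : ι → ℝ) :
    ∑ i, ∑ j, (if i = j then 0 else v i * v j) = (∑ i, v i) ^ 2 - ∑ i, v i ^ 2 := by
  simp_rw [sq, Finset.sum_mul_sum, ← Finset.sum_sub_distrib]
  refine Finset.sum_congr rfl fun i _ => ?_
  rw [← Finset.sum_ite_eq_of_mem Finset.univ i (fun j => v i * v j) (Finset.mem_univ i),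
    ← Finset.sum_sub_distrib]
  refine Finset.sum_congr rfl fun j _ => ?_
  split_ifs <;> simp_all

lemma exists_abs_le_sum_eq_le_sum_sq {g : ℝ} (hg : 0 ≤ g) (n : ℕ) {a : ℝ} (ha : |a| ≤ (n + 1) * g) :
    ∃ v : Fin (n + 1) → ℝ, (∀ i, |v i| ≤ g) ∧ ∑ i, v i = a ∧ n * g ^ 2 ≤ ∑ i, v i ^ 2 := by
  induction n generalizing a with
  | zero => exact ⟨fun _ => a, fun _ => by simpa using ha, by simp, by simp [sq_nonneg]⟩
  | succ n ih =>
    push_cast at ha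
    obtain ⟨c, hc, hac⟩ : ∃ c, |c| = g ∧ |a - c| ≤ (n + 1) * g := by
      rcases le_total 0 a with h | h
      · exact ⟨g, abs_of_nonneg hg,
          abs_le.2 ⟨by nlinarith [abs_le.1 ha], by linarith [abs_le.1 ha]⟩⟩
      · exact ⟨-g, by simp [abs_of_nonneg hg],
          abs_le.2 ⟨by linarith [abs_le.1 ha], by nlinarith [abs_le.1 ha]⟩⟩
    obtain ⟨v, hv, hsum, hsq⟩ := ih hac
    refine ⟨Fin.cons c v, Fin.cases hc.le hv, ?_, ?_⟩
    · rw [Fin.sum_univ_succ]; simp [hsum]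
    · rw [Fin.sum_univ_succ]
      simp only [Fin.cons_zero, Fin.cons_succ, ← sq_abs c, hc]
      push_cast; linarith

def colMoments {n : ℕ} (v : Fin n → ℝ) : ℝ × ℝ :=
  (∑ i, v i, ∑ i, ∑ j, if i = j then 0 else v i * v j)

lemma mem_convexHull_colMoments {n : ℕ} (hn : 1 ≤ n) {a b γ : ℝ}
    (ha : a ^ 2 ≤ n ^ 2 * γ) (hlow : a ^ 2 - (n - 1) * γ ≤ b) (hup : b ≤ n * (n - 1) * γ) :
    (a, b) ∈ convexHull ℝ (colMoments '' {v : Fin n → ℝ | ∀ i, v i ^ 2 ≤ γ}) := by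
  set H := convexHull ℝ (colMoments '' {v : Fin n → ℝ | ∀ i, v i ^ 2 ≤ γ})
  have hn' : (1 : ℝ) ≤ n := by exact_mod_cast hn
  have hγ : 0 ≤ γ := by
    have : 0 ≤ (n : ℝ) ^ 2 * γ := (sq_nonneg a).trans ha
    exact nonneg_of_mul_nonneg_right this (by positivity)
  set g := Real.sqrt γ
  have hg : 0 ≤ g := Real.sqrt_nonneg γ
  have hg2 : g ^ 2 = γ := Real.sq_sqrt hγ
  have hmem : ∀ v : Fin n → ℝ, (∀ i, |v i| ≤ g) →
      (∑ i, v i, (∑ i, v i) ^ 2 - ∑ i, v i ^ 2) ∈ H := fun v hv =>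
    subset_convexHull ℝ _ ⟨v, fun i => hg2 ▸ sq_le_sq' (abs_le.1 (hv i)).1 (abs_le.1 (hv i)).2,
      by rw [colMoments, sum_offDiag_mul_eq]⟩
  have hconst : ∀ c, |c| = g → ((n : ℝ) * c, n * (n - 1) * γ) ∈ H := fun c hc => by
    convert hmem (fun _ => c) fun _ => hc.le using 2
    · simp
    · simp only [Finset.sum_const, Finset.card_univ, Fintype.card_fin, nsmul_eq_mul, ← hg2, ← hc,
        sq_abs]
      ring
  have ha' : |a| ≤ n * g := abs_le_of_sq_le_sq (by rw [mul_pow, hg2]; exact ha) (by positivity)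
  have htop : (a, n * (n - 1) * γ) ∈ H := by
    refine (convex_convexHull ℝ _).segment_subset (hconst (-g) (by simp [hg]))
      (hconst g (abs_of_nonneg hg)) ?_
    rw [← Prod.image_mk_segment_left, segment_eq_Icc (by nlinarith)]
    exact ⟨a, ⟨by linarith [(abs_le.1 ha').1], (abs_le.1 ha').2⟩, rfl⟩
  have hbot : ∃ q ≤ b, (a, q) ∈ H := by
    obtain ⟨m, rfl⟩ : ∃ m, n = m + 1 := ⟨n - 1, by omega⟩
    obtain ⟨v, hv, hsum, hsq⟩ := exists_abs_le_sum_eq_le_sum_sq hg m (by exact_mod_cast ha')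
    refine ⟨_, ?_, hsum ▸ hmem v hv⟩
    push_cast at hlow
    rw [hg2] at hsq
    linarith
  obtain ⟨q, hqb, hq⟩ := hbot
  refine (convex_convexHull ℝ _).segment_subset hq htop ?_
  rw [← Prod.image_mk_segment_right, segment_eq_Icc (hqb.trans hup)]
  exact ⟨b, ⟨hqb, hup⟩, rfl⟩

noncomputable def moments (n d : ℕ) (x : Fin n → Fin d → ℝ) : Fin d → ℝ × ℝ :=
  fun α => (sLin n d α x, sQuad n d α x)

lemma mem_convexHull_moments {n d : ℕ} {γ : Fin d → ℝ} (hγ : ∑ α, γ α ≤ 1)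
    {p : Fin d → ℝ × ℝ}
    (hp : ∀ α, p α ∈ convexHull ℝ (colMoments '' {v : Fin n → ℝ | ∀ i, v i ^ 2 ≤ γ α})) :
    p ∈ convexHull ℝ (moments n d '' {x | ∀ i, ∑ α, x i α ^ 2 ≤ 1}) := by
  refine convexHull_mono ?_ (mem_convexHull_pi (s := Set.univ) fun α _ => hp α)
  intro q hq
  choose v hv hvq using hq
  exact ⟨fun i α => v α (Set.mem_univ α) i,
    fun i => (Finset.sum_le_sum fun α _ => hv α _ i).trans hγ, funext fun α => hvq α _⟩

lemma sQuad_eq (n d : ℕ) (α : Fin d) (x : Fin n → Fin d → ℝ) :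
    sQuad n d α x = sLin n d α x ^ 2 - ∑ i, x i α ^ 2 :=
  sum_offDiag_mul_eq fun i => x i α

lemma sLin_permute (n d : ℕ) (α : Fin d) (σ : Equiv.Perm (Fin n)) (x : Fin n → Fin d → ℝ) :
    sLin n d α (permute σ x) = sLin n d α x :=
  Equiv.sum_comp σ fun i => x i α

lemma sQuad_permute (n d : ℕ) (α : Fin d) (σ : Equiv.Perm (Fin n)) (x : Fin n → Fin d → ℝ) :
    sQuad n d α (permute σ x) = sQuad n d α x := by
  rw [sQuad_eq, sQuad_eq, sLin_permute]
  exact congrArg _ (Equiv.sum_comp σ fun i => x i α ^ 2)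

@[fun_prop]
lemma measurable_sLin (n d : ℕ) (α : Fin d) : Measurable (sLin n d α) := by
  unfold sLin; fun_prop

lemma measurable_sQuad (n d : ℕ) (α : Fin d) : Measurable (sQuad n d α) := by
  simp_rw [funext (sQuad_eq n d α)]
  fun_prop

noncomputable def columnScale (n : ℕ) (a b : ℝ) : ℝ :=
  (n * max b (a ^ 2) - (n - 1) * b) / (n - 1) ^ 2

lemma columnScale_spec {n : ℕ} (hn : 2 ≤ n) (a b : ℝ) :
    a ^ 2 ≤ n ^ 2 * columnScale n a b ∧ a ^ 2 - (n - 1) * columnScale n a b ≤ b ∧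
      b ≤ n * (n - 1) * columnScale n a b := by
  have hn : (2 : ℝ) ≤ n := by exact_mod_cast hn
  have hn1 : (0 : ℝ) < (n - 1) ^ 2 := by nlinarith
  have hMb : b ≤ max b (a ^ 2) := le_max_left _ _
  have hMa : a ^ 2 ≤ max b (a ^ 2) := le_max_right _ _
  have ha : 0 ≤ a ^ 2 := sq_nonneg a
  have hbM : 0 ≤ ((n : ℝ) - 1) * (max b (a ^ 2) - b) := mul_nonneg (by linarith) (by linarith)
  rw [columnScale]
  refine ⟨?_, ?_, ?_⟩
  · rw [mul_div_assoc', le_div_iff₀ hn1]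
    nlinarith [mul_nonneg ha (by linarith : (0 : ℝ) ≤ 2 * n - 1)]
  · rw [mul_div_assoc', sub_le_comm, le_div_iff₀ hn1]
    nlinarith
  · rw [mul_div_assoc', le_div_iff₀ hn1]
    nlinarith [mul_nonneg (by linarith : (0 : ℝ) ≤ n - 1) (by nlinarith : (0 : ℝ) ≤
      ((n : ℝ) ^ 2 - 1) * (max b (a ^ 2) - b) + max b (a ^ 2))]

lemma sum_columnScale_le_one {n d : ℕ} (hn : 2 ≤ n) {z0 : ℝ} (hz0 : 0 < z0) {z zz : Fin d → ℝ}
    (hineq : ∑ α, max (z0 * zz α / n) ((z α) ^ 2 / n)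
      ≤ z0 ^ 2 * (((n : ℝ) - 1) / n) ^ 2 + ∑ α, ((n : ℝ) - 1) * z0 * zz α / (n : ℝ) ^ 2) :
    ∑ α, columnScale n (z α / z0) (zz α / z0) ≤ 1 := by
  have hn : (2 : ℝ) ≤ n := by exact_mod_cast hn
  have hn1 : (n : ℝ) - 1 ≠ 0 := by linarith
  have hterm : ∀ α, ((n : ℝ) - 1) ^ 2 * z0 ^ 2 * columnScale n (z α / z0) (zz α / z0) =
      n ^ 2 * (max (z0 * zz α / n) (z α ^ 2 / n) - (n - 1) * z0 * zz α / n ^ 2) := fun α => by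
    have hmax : max (zz α / z0) ((z α / z0) ^ 2) = max (z0 * zz α) (z α ^ 2) / z0 ^ 2 := by
      rw [← max_div_div_right (by positivity), div_pow]
      congr 1; field_simp
    rw [columnScale, hmax, max_div_div_right (by positivity)]
    field_simp
  have hsum : ((n : ℝ) - 1) ^ 2 * z0 ^ 2 * ∑ α, columnScale n (z α / z0) (zz α / z0) ≤
      ((n : ℝ) - 1) ^ 2 * z0 ^ 2 * 1 := by
    rw [Finset.mul_sum, Finset.sum_congr rfl fun α _ => hterm α, ← Finset.mul_sum,
      Finset.sum_sub_distrib]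
    calc (n : ℝ) ^ 2 * (∑ α, max (z0 * zz α / n) (z α ^ 2 / n) -
          ∑ α, ((n : ℝ) - 1) * z0 * zz α / n ^ 2)
        ≤ n ^ 2 * (z0 ^ 2 * (((n : ℝ) - 1) / n) ^ 2) := by gcongr; linarith
      _ = ((n : ℝ) - 1) ^ 2 * z0 ^ 2 * 1 := by field_simp
  exact le_of_mul_le_mul_left hsum (by positivity)

theorem stmt_14_general (n d : ℕ) (hn : 2 ≤ n)
    (z0 : ℝ) (z zz : Fin d → ℝ)
    (hz0 : 0 < z0)
    (hineq : ∑ α, max (z0 * zz α / n) ((z α) ^ 2 / n)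
      ≤ z0 ^ 2 * (((n : ℝ) - 1) / n) ^ 2
        + ∑ α, ((n : ℝ) - 1) * z0 * zz α / (n : ℝ) ^ 2) :
    ∃ μ : Measure (Fin n → Fin d → ℝ), IsFiniteMeasure μ ∧
      -- μ is supported on K_n^d
      μ {x | ¬ ∀ i, ∑ α, (x i α) ^ 2 ≤ 1} = 0 ∧
      -- μ is invariant under permutations of the n ball factors
      (∀ σ : Equiv.Perm (Fin n),
        Measure.map (fun x : Fin n → Fin d → ℝ => fun i => x (σ i)) μ = μ) ∧
      (μ {x | ∀ i, ∑ α, (x i α) ^ 2 ≤ 1}).toReal = z0 ∧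
      (∀ α, ∫ x, sLin n d α x ∂μ = z α) ∧
      (∀ α, ∫ x, sQuad n d α x ∂μ = zz α) := by
  set K := {x : Fin n → Fin d → ℝ | ∀ i, ∑ α, x i α ^ 2 ≤ 1}
  have hmem : (fun α => (z α / z0, zz α / z0)) ∈ convexHull ℝ (moments n d '' K) :=
    mem_convexHull_moments (sum_columnScale_le_one hn hz0 hineq) fun α =>
      have h := columnScale_spec hn (z α / z0) (zz α / z0)
      mem_convexHull_colMoments (by omega) h.1 h.2.1 h.2.2
  obtain ⟨κ, _, w, p, hw0, hw1, hpK, hwp⟩ := mem_convexHull_iff_exists_fintype.1 hmem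
  choose y hyK hyp using hpK
  have hcoord : ∀ α, ∑ k, w k * sLin n d α (y k) = z α / z0 ∧
      ∑ k, w k * sQuad n d α (y k) = zz α / z0 := fun α => by
    simpa [← hyp, moments, Prod.ext_iff, Prod.fst_sum, Prod.snd_sum] using congrFun hwp α
  set μ0 := ∑ k, ENNReal.ofReal (z0 * w k) • Measure.dirac (y k)
  have hK : MeasurableSet K := by
    simp_rw [K, Set.ofPred_forall]
    exact MeasurableSet.iInter fun i => measurableSet_le (by fun_prop) measurable_const
  have hKinv : ∀ σ, permute σ ⁻¹' K = K := fun σ =>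
    preimage_permute_setOf_forall σ fun v : Fin d → ℝ => ∑ α, v α ^ 2 ≤ 1
  have hintegral : ∀ f, Measurable f → (∀ σ x, f (permute σ x) = f x) →
      ∫ x, f x ∂μ0.symmetrize = z0 * ∑ k, w k * f (y k) := fun f hf hinv => by
    rw [Measure.integral_symmetrize μ0 hf.stronglyMeasurable (integrable_sum_smul_dirac _ _ f)
        hinv,
      integral_sum_smul_dirac (fun k => mul_nonneg hz0.le (hw0 k)), Finset.mul_sum]
    simp_rw [smul_eq_mul, mul_assoc]
  have hμ0 : IsFiniteMeasure μ0 := isFiniteMeasure_sum_smul_dirac (fun k => z0 * w k) y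
  refine ⟨μ0.symmetrize, Measure.isFiniteMeasure_symmetrize μ0, ?_,
    Measure.map_permute_symmetrize μ0, ?_, fun α => ?_, fun α => ?_⟩
  · change μ0.symmetrize Kᶜ = 0
    rw [Measure.symmetrize_apply μ0 hK.compl fun σ => by rw [Set.preimage_compl, hKinv]]
    exact sum_smul_dirac_apply_of_forall_notMem _ hK.compl fun k => not_not.2 (hyK k)
  · rw [Measure.symmetrize_apply μ0 hK hKinv, sum_smul_dirac_apply_of_forall_mem _ hK hyK,
      ← ENNReal.ofReal_sum_of_nonneg fun k _ => mul_nonneg hz0.le (hw0 k), ← Finset.mul_sum, hw1,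
      mul_one, ENNReal.toReal_ofReal hz0.le]
  · rw [hintegral _ (measurable_sLin n d α) (sLin_permute n d α), (hcoord α).1,
      mul_div_cancel₀ _ hz0.ne']
  · rw [hintegral _ (measurable_sQuad n d α) (sQuad_permute n d α), (hcoord α).2,
      mul_div_cancel₀ _ hz0.ne']

theorem stmt_14 (n d : ℕ) (hn : 2 ≤ n) (hd : 1 ≤ d)
    (z0 : ℝ) (z zz : Fin d → ℝ)
    (hz0 : 0 < z0)
    (hineq : ∑ α, max (z0 * zz α / n) ((z α) ^ 2 / n)
      ≤ z0 ^ 2 * (((n : ℝ) - 1) / n) ^ 2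
        + ∑ α, ((n : ℝ) - 1) * z0 * zz α / (n : ℝ) ^ 2) :
    ∃ μ : Measure (Fin n → Fin d → ℝ), IsFiniteMeasure μ ∧
      -- μ is supported on K_n^d
      μ {x | ¬ ∀ i, ∑ α, (x i α) ^ 2 ≤ 1} = 0 ∧
      -- μ is invariant under permutations of the n ball factors
      (∀ σ : Equiv.Perm (Fin n),
        Measure.map (fun x : Fin n → Fin d → ℝ => fun i => x (σ i)) μ = μ) ∧
      (μ {x | ∀ i, ∑ α, (x i α) ^ 2 ≤ 1}).toReal = z0 ∧
      (∀ α, ∫ x, sLin n d α x ∂μ = z α) ∧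
      (∀ α, ∫ x, sQuad n d α x ∂μ = zz α) :=
  stmt_14_general n d hn z0 z zz hz0 hineq
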